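/- Let H be an induced subgraph of a connected simple graph G, and let G be an induced subgraph of a connected simple graph R, where diam(H) = diam(G) = 2, β(R) = n(R) − t, and β(H) = n(H) − t for some positive integer t. Then β(G) = n(G) − t. -/

import Mathlib

namespace PaperMetricDim

open SimpleGraph

variable {V : Type*}

/-- A set `W` of vertices resolves the graph `G`: any two distinct vertices have
different distance to some vertex of `W`. -/
def Resolves (G : SimpleGraph V) (W : Set V) : Prop :=
  ∀ u v : V, u ≠ v → ∃ w ∈ W, G.dist u w ≠ G.dist v w

/-- The metric dimension of `G`: the minimum cardinality of a resolving set. -/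
noncomputable def metricDim (G : SimpleGraph V) : ℕ :=
  sInf {k : ℕ | ∃ W : Set V, Resolves G W ∧ W.ncard = k}

/-- `G` is connected and has diameter exactly `d`. -/
def diamEq (G : SimpleGraph V) (d : ℕ) : Prop :=
  G.Connected ∧ (∀ u v : V, G.dist u v ≤ d) ∧ ∃ u v : V, G.dist u v = d

/-- A set of vertices is homogeneous if it induces a complete or an empty subgraph. -/
def Homogeneous (G : SimpleGraph V) (S : Set V) : Prop :=
  (∀ a ∈ S, ∀ b ∈ S, a ≠ b → G.Adj a b) ∨ (∀ a ∈ S, ∀ b ∈ S, ¬ G.Adj a b)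

/-- Two distinct vertices are twins: they have the same neighbours apart from
each other. -/
def Twins (G : SimpleGraph V) (u v : V) : Prop :=
  u ≠ v ∧ G.neighborSet u \ {v} = G.neighborSet v \ {u}

/-- The twin equivalence relation: equal or twins. -/
def twinRel (G : SimpleGraph V) (u v : V) : Prop := u = v ∨ Twins G u v

/-- The twin class of a vertex. -/
def twinClass (G : SimpleGraph V) (v : V) : Set V := {u : V | twinRel G v u}

/-- The vertices of the twin graph: twin equivalence classes. -/
def TwinVertex (G : SimpleGraph V) : Type _ := {S : Set V // ∃ v : V, S = twinClass G v}

/-- The twin graph `G*` of `G`: twin classes, two distinct classes being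
adjacent iff (some, equivalently all) representatives are adjacent in `G`. -/
def twinGraph (G : SimpleGraph V) : SimpleGraph (TwinVertex G) where
  Adj A B := A ≠ B ∧ ∃ a ∈ A.1, ∃ b ∈ B.1, G.Adj a b
  symm := by
    constructor
    rintro A B ⟨hne, a, ha, b, hb, hab⟩
    exact ⟨hne.symm, b, hb, a, ha, hab.symm⟩
  loopless := by constructor; rintro A ⟨hne, -⟩; exact hne rfl

/-- The twin class of `v`, as a vertex of the twin graph. -/
def cls (G : SimpleGraph V) (v : V) : TwinVertex G := ⟨twinClass G v, v, rfl⟩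

/-- A twin-graph vertex of type (1): a singleton class. -/
def typeOne (G : SimpleGraph V) (A : TwinVertex G) : Prop := ∃ v : V, A.1 = {v}

/-- A twin-graph vertex of type (K): a class with at least two vertices inducing
a complete subgraph. -/
def typeK (G : SimpleGraph V) (A : TwinVertex G) : Prop :=
  A.1.Nontrivial ∧ ∀ a ∈ A.1, ∀ b ∈ A.1, a ≠ b → G.Adj a b

/-- A twin-graph vertex of type (N): a class with at least two vertices inducing
an empty subgraph. -/
def typeN (G : SimpleGraph V) (A : TwinVertex G) : Prop :=
  A.1.Nontrivial ∧ ∀ a ∈ A.1, ∀ b ∈ A.1, ¬ G.Adj a b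

/-- Type (1K): type (1) or type (K). -/
def type1K (G : SimpleGraph V) (A : TwinVertex G) : Prop := typeOne G A ∨ typeK G A

/-- Type (1N): type (1) or type (N). -/
def type1N (G : SimpleGraph V) (A : TwinVertex G) : Prop := typeOne G A ∨ typeN G A

/-- Type (KN): type (K) or type (N). -/
def typeKN (G : SimpleGraph V) (A : TwinVertex G) : Prop := typeK G A ∨ typeN G A

/-- `Γ_i(v)`: the set of vertices at distance `i` from `v`. -/
def Gamma (G : SimpleGraph V) (i : ℕ) (v : V) : Set V := {u : V | G.dist u v = i}

/-- `Γ_i^*(v^*)`: the set of twin-graph vertices at distance `i` from `v^*`. -/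
def GammaStar (G : SimpleGraph V) (i : ℕ) (v : V) : Set (TwinVertex G) :=
  {A : TwinVertex G | (twinGraph G).dist A (cls G v) = i}

/-- `R_1(v)`: neighbours of `v` having a neighbour at distance 2 from `v`. -/
def R1 (G : SimpleGraph V) (v : V) : Set V :=
  {x ∈ Gamma G 1 v | ∃ y ∈ Gamma G 2 v, G.Adj x y}

/-- `R_2(v) = Γ_1(v) \ R_1(v)`. -/
def R2 (G : SimpleGraph V) (v : V) : Set V := Gamma G 1 v \ R1 G v

/-- `R_1^*(v^*)`: twin-graph neighbours of `v^*` having a neighbour in `Γ_2^*(v^*)`. -/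
def R1Star (G : SimpleGraph V) (v : V) : Set (TwinVertex G) :=
  {A ∈ GammaStar G 1 v | ∃ B ∈ GammaStar G 2 v, (twinGraph G).Adj A B}

/-- `R_2^*(v^*) = Γ_1^*(v^*) \ R_1^*(v^*)`. -/
def R2Star (G : SimpleGraph V) (v : V) : Set (TwinVertex G) :=
  GammaStar G 1 v \ R1Star G v

/-- `M_1(x) = Γ_1(v) ∩ Γ_1(x)` (for `x ∈ Γ_1(v)`). -/
def M1 (G : SimpleGraph V) (v x : V) : Set V := Gamma G 1 v ∩ Gamma G 1 x

/-- `M_2(x) = Γ_1(v) ∩ Γ_2(x)` (for `x ∈ Γ_1(v)`). -/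
def M2 (G : SimpleGraph V) (v x : V) : Set V := Gamma G 1 v ∩ Gamma G 2 x

/-- Structure `G_1`: the twin graph is `K_3` and has at most one vertex of type (1K). -/
def structG1 (G : SimpleGraph V) : Prop :=
  ∃ a b c : TwinVertex G, a ≠ b ∧ a ≠ c ∧ b ≠ c ∧
    (∀ X : TwinVertex G, X = a ∨ X = b ∨ X = c) ∧
    (twinGraph G).Adj a b ∧ (twinGraph G).Adj a c ∧ (twinGraph G).Adj b c ∧
    (∀ X Y : TwinVertex G, type1K G X → type1K G Y → X = Y)

/-- Structure `G_2`: the twin graph is the path `P_3` with (a) centre of type (N)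
and some leaf of type (K), or (b) one leaf of type (K) and the other of type (KN). -/
def structG2 (G : SimpleGraph V) : Prop :=
  ∃ a b c : TwinVertex G, a ≠ b ∧ a ≠ c ∧ b ≠ c ∧
    (∀ X : TwinVertex G, X = a ∨ X = b ∨ X = c) ∧
    (twinGraph G).Adj a b ∧ (twinGraph G).Adj b c ∧ ¬ (twinGraph G).Adj a c ∧
    ((typeN G b ∧ (typeK G a ∨ typeK G c)) ∨
     (typeK G a ∧ typeKN G c) ∨ (typeK G c ∧ typeKN G a))

/-- Structure `G_3`: the twin graph is the paw, the triangle being `u, p, q` with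
the pendant vertex `l` attached to `u`; `p` is of type (N), `q` of type (1K),
`l` of type (1N); and if `q` is of type (K) then neither `l` nor `u` is of type (N). -/
def structG3 (G : SimpleGraph V) : Prop :=
  ∃ u p q l : TwinVertex G,
    u ≠ p ∧ u ≠ q ∧ u ≠ l ∧ p ≠ q ∧ p ≠ l ∧ q ≠ l ∧
    (∀ X : TwinVertex G, X = u ∨ X = p ∨ X = q ∨ X = l) ∧
    (twinGraph G).Adj u p ∧ (twinGraph G).Adj u q ∧ (twinGraph G).Adj p q ∧
    (twinGraph G).Adj u l ∧ ¬ (twinGraph G).Adj p l ∧ ¬ (twinGraph G).Adj q l ∧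
    typeN G p ∧ type1K G q ∧ type1N G l ∧
    (typeK G q → ¬ typeN G l ∧ ¬ typeN G u)

/-- Structure `G_4`: the twin graph is the cycle `C_5` and every vertex is of type (1). -/
def structG4 (G : SimpleGraph V) : Prop :=
  ∃ v0 v1 v2 v3 v4 : TwinVertex G,
    v0 ≠ v1 ∧ v0 ≠ v2 ∧ v0 ≠ v3 ∧ v0 ≠ v4 ∧ v1 ≠ v2 ∧ v1 ≠ v3 ∧ v1 ≠ v4 ∧
    v2 ≠ v3 ∧ v2 ≠ v4 ∧ v3 ≠ v4 ∧
    (∀ X : TwinVertex G, X = v0 ∨ X = v1 ∨ X = v2 ∨ X = v3 ∨ X = v4) ∧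
    (twinGraph G).Adj v0 v1 ∧ (twinGraph G).Adj v1 v2 ∧ (twinGraph G).Adj v2 v3 ∧
    (twinGraph G).Adj v3 v4 ∧ (twinGraph G).Adj v4 v0 ∧
    ¬ (twinGraph G).Adj v0 v2 ∧ ¬ (twinGraph G).Adj v1 v3 ∧ ¬ (twinGraph G).Adj v2 v4 ∧
    ¬ (twinGraph G).Adj v3 v0 ∧ ¬ (twinGraph G).Adj v4 v1 ∧
    (∀ X : TwinVertex G, typeOne G X)

/-- Structure `G_5`: the twin graph is `C_5` with one chord (cycle `v0 v1 v2 v3 v4`,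
chord `v0 v2`); the two adjacent degree-2 vertices `v3, v4` are of type (1), the
other vertices of type (1K). -/
def structG5 (G : SimpleGraph V) : Prop :=
  ∃ v0 v1 v2 v3 v4 : TwinVertex G,
    v0 ≠ v1 ∧ v0 ≠ v2 ∧ v0 ≠ v3 ∧ v0 ≠ v4 ∧ v1 ≠ v2 ∧ v1 ≠ v3 ∧ v1 ≠ v4 ∧
    v2 ≠ v3 ∧ v2 ≠ v4 ∧ v3 ≠ v4 ∧
    (∀ X : TwinVertex G, X = v0 ∨ X = v1 ∨ X = v2 ∨ X = v3 ∨ X = v4) ∧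
    (twinGraph G).Adj v0 v1 ∧ (twinGraph G).Adj v1 v2 ∧ (twinGraph G).Adj v2 v3 ∧
    (twinGraph G).Adj v3 v4 ∧ (twinGraph G).Adj v4 v0 ∧ (twinGraph G).Adj v0 v2 ∧
    ¬ (twinGraph G).Adj v1 v3 ∧ ¬ (twinGraph G).Adj v1 v4 ∧ ¬ (twinGraph G).Adj v2 v4 ∧
    typeOne G v3 ∧ typeOne G v4 ∧ type1K G v0 ∧ type1K G v1 ∧ type1K G v2

/-- Structure `G_6`: the twin graph is `C_5` with two adjacent chords (cycle
`v0 v1 v2 v3 v4`, chords `v0 v2` and `v0 v3`, so `v0` has degree 4); `v0` is of any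
type, the other vertices of type (1K); no two non-adjacent vertices are both of
type (K), and no two adjacent vertices have the different types (K) and (N). -/
def structG6 (G : SimpleGraph V) : Prop :=
  ∃ v0 v1 v2 v3 v4 : TwinVertex G,
    v0 ≠ v1 ∧ v0 ≠ v2 ∧ v0 ≠ v3 ∧ v0 ≠ v4 ∧ v1 ≠ v2 ∧ v1 ≠ v3 ∧ v1 ≠ v4 ∧
    v2 ≠ v3 ∧ v2 ≠ v4 ∧ v3 ≠ v4 ∧
    (∀ X : TwinVertex G, X = v0 ∨ X = v1 ∨ X = v2 ∨ X = v3 ∨ X = v4) ∧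
    (twinGraph G).Adj v0 v1 ∧ (twinGraph G).Adj v1 v2 ∧ (twinGraph G).Adj v2 v3 ∧
    (twinGraph G).Adj v3 v4 ∧ (twinGraph G).Adj v4 v0 ∧ (twinGraph G).Adj v0 v2 ∧
    (twinGraph G).Adj v0 v3 ∧
    ¬ (twinGraph G).Adj v1 v3 ∧ ¬ (twinGraph G).Adj v1 v4 ∧ ¬ (twinGraph G).Adj v2 v4 ∧
    type1K G v1 ∧ type1K G v2 ∧ type1K G v3 ∧ type1K G v4 ∧
    (∀ X Y : TwinVertex G, X ≠ Y → ¬ (twinGraph G).Adj X Y →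
      ¬ (typeK G X ∧ typeK G Y)) ∧
    (∀ X Y : TwinVertex G, (twinGraph G).Adj X Y → ¬ (typeK G X ∧ typeN G Y))

/-- Structure `G_7`: the twin graph is the kite (`K_4` minus an edge, vertices
`a, b` of degree 3 in the kite and `c, d` the non-adjacent pair) with a pendant
vertex `l` attached to the degree-3 vertex `a`; `l` is of type (1), `a` and `b`
are of type (1K), one of `c, d` is of type (K) and the other of type (1). -/
def structG7 (G : SimpleGraph V) : Prop :=
  ∃ a b c d l : TwinVertex G,
    a ≠ b ∧ a ≠ c ∧ a ≠ d ∧ a ≠ l ∧ b ≠ c ∧ b ≠ d ∧ b ≠ l ∧ c ≠ d ∧ c ≠ l ∧ d ≠ l ∧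
    (∀ X : TwinVertex G, X = a ∨ X = b ∨ X = c ∨ X = d ∨ X = l) ∧
    (twinGraph G).Adj a b ∧ (twinGraph G).Adj a c ∧ (twinGraph G).Adj a d ∧
    (twinGraph G).Adj b c ∧ (twinGraph G).Adj b d ∧ (twinGraph G).Adj a l ∧
    ¬ (twinGraph G).Adj c d ∧ ¬ (twinGraph G).Adj b l ∧ ¬ (twinGraph G).Adj c l ∧
    ¬ (twinGraph G).Adj d l ∧
    typeOne G l ∧ type1K G a ∧ type1K G b ∧ typeK G c ∧ typeOne G d

/-- Structure `G_8`: the twin graph is the kite (`K_4` minus an edge, `a, b` of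
degree 3 and `c, d` the non-adjacent degree-2 pair); one degree-2 vertex `c` is of
type (K) and the other `d` of type (1); one degree-3 vertex `a` is of type (N)
and the other `b` of type (1K). -/
def structG8 (G : SimpleGraph V) : Prop :=
  ∃ a b c d : TwinVertex G,
    a ≠ b ∧ a ≠ c ∧ a ≠ d ∧ b ≠ c ∧ b ≠ d ∧ c ≠ d ∧
    (∀ X : TwinVertex G, X = a ∨ X = b ∨ X = c ∨ X = d) ∧
    (twinGraph G).Adj a b ∧ (twinGraph G).Adj a c ∧ (twinGraph G).Adj a d ∧
    (twinGraph G).Adj b c ∧ (twinGraph G).Adj b d ∧ ¬ (twinGraph G).Adj c d ∧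
    typeN G a ∧ type1K G b ∧ typeK G c ∧ typeOne G d

/-- Structure `G_9`: the twin graph is `C_4`, two adjacent vertices of type (K)
and the other two of type (1). -/
def structG9 (G : SimpleGraph V) : Prop :=
  ∃ v0 v1 v2 v3 : TwinVertex G,
    v0 ≠ v1 ∧ v0 ≠ v2 ∧ v0 ≠ v3 ∧ v1 ≠ v2 ∧ v1 ≠ v3 ∧ v2 ≠ v3 ∧
    (∀ X : TwinVertex G, X = v0 ∨ X = v1 ∨ X = v2 ∨ X = v3) ∧
    (twinGraph G).Adj v0 v1 ∧ (twinGraph G).Adj v1 v2 ∧ (twinGraph G).Adj v2 v3 ∧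
    (twinGraph G).Adj v3 v0 ∧ ¬ (twinGraph G).Adj v0 v2 ∧ ¬ (twinGraph G).Adj v1 v3 ∧
    typeK G v0 ∧ typeK G v1 ∧ typeOne G v2 ∧ typeOne G v3

/-- Structure `G_10`: the twin graph is the wheel `C_4 ∨ K_1` (hub `h`, rim
`v0 v1 v2 v3`); two adjacent rim (degree-3) vertices `v0, v1` are of type (K), the
hub is of type (1K), and the other vertices of type (1). -/
def structG10 (G : SimpleGraph V) : Prop :=
  ∃ h v0 v1 v2 v3 : TwinVertex G,
    h ≠ v0 ∧ h ≠ v1 ∧ h ≠ v2 ∧ h ≠ v3 ∧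
    v0 ≠ v1 ∧ v0 ≠ v2 ∧ v0 ≠ v3 ∧ v1 ≠ v2 ∧ v1 ≠ v3 ∧ v2 ≠ v3 ∧
    (∀ X : TwinVertex G, X = h ∨ X = v0 ∨ X = v1 ∨ X = v2 ∨ X = v3) ∧
    (twinGraph G).Adj h v0 ∧ (twinGraph G).Adj h v1 ∧ (twinGraph G).Adj h v2 ∧
    (twinGraph G).Adj h v3 ∧
    (twinGraph G).Adj v0 v1 ∧ (twinGraph G).Adj v1 v2 ∧ (twinGraph G).Adj v2 v3 ∧
    (twinGraph G).Adj v3 v0 ∧ ¬ (twinGraph G).Adj v0 v2 ∧ ¬ (twinGraph G).Adj v1 v3 ∧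
    typeK G v0 ∧ typeK G v1 ∧ type1K G h ∧ typeOne G v2 ∧ typeOne G v3

/-! If `G[s]` is connected of diameter at most 2, distances between vertices of
`s` are the same in `G[s]` and in `G` (distance 1 is adjacency, and otherwise both are 2), so a
resolving set of `G[s]` together with all vertices outside `s` resolves `G`. Hence
`β(G) - n(G) ≤ β(G[s]) - n(G[s])`. Applied to `H ⊆ G ⊆ R`, this squeezes `β(G) - n(G)` between
`β(R) - n(R) = -t` and `β(H) - n(H) = -t`. -/

section Distance

variable {G : SimpleGraph V} {s : Set V}

theorem dist_induce_eq_of_dist_le_two {a b : s} (hab : (G.induce s).Reachable a b)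
    (h2 : (G.induce s).dist a b ≤ 2) : G.dist a b = (G.induce s).dist a b := by
  obtain ⟨p, hp⟩ := hab.exists_walk_length_eq_dist
  let q : G.Walk a b := p.map (Embedding.induce s).toHom
  have hle : G.dist a b ≤ (G.induce s).dist a b := hp ▸ Walk.length_map _ p ▸ dist_le q
  rcases eq_or_ne a b with rfl | hne
  · simp
  by_cases hadj : G.Adj a b
  · rw [dist_eq_one_iff_adj.2 hadj, dist_eq_one_iff_adj.2 (by simpa using hadj)]
  · have := hab.one_lt_dist_of_ne_of_not_adj hne (by simpa using hadj)
    have := Reachable.one_lt_dist_of_ne_of_not_adj ⟨q⟩ (Subtype.coe_ne_coe.2 hne) hadj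
    omega

end Distance

section Resolving

variable {G : SimpleGraph V}

theorem resolves_of_forall_notMem {W : Set V} (hG : G.Connected)
    (h : ∀ u v, u ≠ v → u ∉ W → v ∉ W → ∃ w ∈ W, G.dist u w ≠ G.dist v w) :
    Resolves G W := by
  intro u v huv
  by_cases hu : u ∈ W
  · refine ⟨u, hu, ?_⟩
    rw [SimpleGraph.dist_self]
    exact fun h ↦ huv (hG.dist_eq_zero_iff.1 h.symm).symm
  by_cases hv : v ∈ W
  · refine ⟨v, hv, ?_⟩
    rw [SimpleGraph.dist_self]
    exact fun h ↦ huv (hG.dist_eq_zero_iff.1 h)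
  exact h u v huv hu hv

theorem resolves_univ (hG : G.Connected) : Resolves G Set.univ :=
  resolves_of_forall_notMem hG fun u _ _ hu _ ↦ absurd (Set.mem_univ u) hu

theorem Resolves.nonempty [Nontrivial V] {W : Set V} (h : Resolves G W) : W.Nonempty := by
  obtain ⟨u, v, huv⟩ := exists_pair_ne V
  obtain ⟨w, hw, -⟩ := h u v huv
  exact ⟨w, hw⟩

theorem Resolves.image_val_union_compl {s : Set V} {S : Set s} (hG : G.Connected)
    (hs : (G.induce s).Connected) (hdiam : ∀ u v : s, (G.induce s).dist u v ≤ 2)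
    (hS : Resolves (G.induce s) S) : Resolves G (Subtype.val '' S ∪ sᶜ) := by
  refine resolves_of_forall_notMem hG fun u v huv hu hv ↦ ?_
  have hus : u ∈ s := by_contra fun h ↦ hu (Or.inr h)
  have hvs : v ∈ s := by_contra fun h ↦ hv (Or.inr h)
  obtain ⟨w, hwS, hw⟩ := hS ⟨u, hus⟩ ⟨v, hvs⟩ (by simpa using huv)
  refine ⟨w, Or.inl ⟨w, hwS, rfl⟩, ?_⟩
  rwa [← dist_induce_eq_of_dist_le_two (hs _ _) (hdiam _ _),
    ← dist_induce_eq_of_dist_le_two (hs _ _) (hdiam _ _)] at hw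

end Resolving

section MetricDim

variable {G : SimpleGraph V}

theorem metricDim_le_ncard {W : Set V} (h : Resolves G W) : metricDim G ≤ W.ncard :=
  Nat.sInf_le ⟨W, h, rfl⟩

theorem exists_resolves_ncard_eq_metricDim (hG : G.Connected) :
    ∃ W : Set V, Resolves G W ∧ W.ncard = metricDim G :=
  Nat.sInf_mem (s := {k | ∃ W : Set V, Resolves G W ∧ W.ncard = k})
    ⟨_, Set.univ, resolves_univ hG, rfl⟩

theorem metricDim_pos [Finite V] [Nontrivial V] (hG : G.Connected) : 0 < metricDim G := by
  obtain ⟨W, hW, hcard⟩ := exists_resolves_ncard_eq_metricDim hG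
  exact hcard ▸ (Set.ncard_pos).2 hW.nonempty

theorem metricDim_le_metricDim_induce_add_ncard_compl [Finite V] {s : Set V}
    (hG : G.Connected) (hs : (G.induce s).Connected)
    (hdiam : ∀ u v : s, (G.induce s).dist u v ≤ 2) :
    metricDim G ≤ metricDim (G.induce s) + sᶜ.ncard := by
  obtain ⟨S, hS, hcard⟩ := exists_resolves_ncard_eq_metricDim hs
  calc metricDim G ≤ (Subtype.val '' S ∪ sᶜ).ncard :=
        metricDim_le_ncard (hS.image_val_union_compl hG hs hdiam)
    _ ≤ (Subtype.val '' S).ncard + sᶜ.ncard := Set.ncard_union_le _ _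
    _ = metricDim (G.induce s) + sᶜ.ncard := by
        rw [Set.ncard_image_of_injective _ Subtype.val_injective, hcard]

end MetricDim

theorem metricDim_eq_of_sandwich_general
    {W : Type*} [Fintype W] (R : SimpleGraph W) (hR : R.Connected)
    (sG : Set W) (sH : Set ↥sG) (t : ℕ)
    (hdiamG : diamEq (R.induce sG) 2)
    (hdiamH : diamEq ((R.induce sG).induce sH) 2)
    (hbetaR : metricDim R = Fintype.card W - t)
    (hbetaH : metricDim ((R.induce sG).induce sH) = Nat.card sH - t) :
    metricDim (R.induce sG) = Nat.card sG - t := by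
  obtain ⟨hconnG, hdiam2G, -⟩ := hdiamG
  obtain ⟨hconnH, hdiam2H, u, v, huv⟩ := hdiamH
  have : Nontrivial sH := nontrivial_of_ne u v (by rintro rfl; simp at huv)
  have hRG := metricDim_le_metricDim_induce_add_ncard_compl hR hconnG hdiam2G
  have hGH := metricDim_le_metricDim_induce_add_ncard_compl hconnG hconnH hdiam2H
  -- `β(H) > 0` gives `t < n(H) ≤ n(G) ≤ n(R)`, so none of the subtractions truncates.
  have hposH := metricDim_pos hconnH
  have hcardG := Set.ncard_add_ncard_compl sG
  have hcardH := Set.ncard_add_ncard_compl sH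
  rw [Nat.card_eq_fintype_card] at hcardG
  rw [Nat.card_coe_set_eq] at hcardH ⊢ hbetaH
  omega

/-- If `H` is an induced subgraph of `G`, `G` is an induced subgraph of `R`,
`diam(H) = diam(G) = 2`, `β(R) = n(R) - t` and `β(H) = n(H) - t` for some positive
`t`, then `β(G) = n(G) - t`. -/
theorem metricDim_eq_of_sandwich
    {W : Type*} [Fintype W] (R : SimpleGraph W) (hR : R.Connected)
    (sG : Set W) (sH : Set ↥sG) (t : ℕ) (ht : 0 < t)
    (hdiamG : diamEq (R.induce sG) 2)
    (hdiamH : diamEq ((R.induce sG).induce sH) 2)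
    (hbetaR : metricDim R = Fintype.card W - t)
    (hbetaH : metricDim ((R.induce sG).induce sH) = Nat.card sH - t) :
    metricDim (R.induce sG) = Nat.card sG - t :=
  metricDim_eq_of_sandwich_general R hR sG sH t hdiamG hdiamH hbetaR hbetaH

end PaperMetricDim
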